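/- arXiv:1207.5090 — 2 statements merged into one kernel-verified Lean document; each statement's English description precedes it below -/
import Mathlib

section
/- Let ν > 1 be real, n ≥ 1 a natural number, and define [k] = (ν^k − ν^{−k})/(ν − ν^{−1}). Let p, q be positive reals with p + q = [n+1], let σ, τ, λ, μ be complex numbers with |σ| = |τ| = |λ| = 1 and μ² = λ, satisfying 1 + σp + τq = 0 and σ − τ = μ·√([n][n+2]/(pq)). Then, writing r = p/q, we have r + 1/r = (λ + λ⁻¹ + 2)/([n][n+2]) + 2. -/
noncomputable def qint (ν : ℝ) (k : ℕ) : ℝ := (ν ^ k - ν⁻¹ ^ k) / (ν - ν⁻¹)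

open ComplexConjugate
theorem stmt_10 (ν : ℝ) (hν : 1 < ν) (n : ℕ) (hn : 1 ≤ n)
    (p q : ℝ) (hp : 0 < p) (hq : 0 < q) (hsum : p + q = qint ν (n + 1))
    (σ τ lam μ : ℂ) (hσ : ‖σ‖ = 1) (hτ : ‖τ‖ = 1)
    (hlam : ‖lam‖ = 1) (hμ : μ ^ 2 = lam)
    (h1 : 1 + σ * p + τ * q = 0)
    (h2 : σ - τ = μ * (Real.sqrt (qint ν n * qint ν (n + 2) / (p * q)) : ℂ)) :
    ((p / q + q / p : ℝ) : ℂ) =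
      (lam + lam⁻¹ + 2) / ((qint ν n * qint ν (n + 2) : ℝ) : ℂ) + 2 := by
  have hν0 : (0:ℝ) < ν := lt_trans one_pos hν
  have hνne : ν ≠ 0 := ne_of_gt hν0
  have hinv : ν⁻¹ < ν := lt_trans (inv_lt_one_of_one_lt₀ hν) hν
  have hdpos : 0 < ν - ν⁻¹ := sub_pos.mpr hinv
  have hqpos : ∀ k : ℕ, k ≠ 0 → 0 < qint ν k := by
    intro k hk
    have h := pow_lt_pow_left₀ hinv (inv_nonneg.mpr hν0.le) hk
    exact div_pos (sub_pos.mpr h) hdpos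
  have ha : 0 < qint ν n := hqpos n (by omega)
  have hb : 0 < qint ν (n+2) := hqpos _ (by omega)
  have hdne : ν - ν⁻¹ ≠ 0 := ne_of_gt hdpos
  have hpown : ν ^ n * ν⁻¹ ^ n = 1 := by
    rw [← mul_pow, mul_inv_cancel₀ hνne, one_pow]
  have hnum : (ν^(n+1) - ν⁻¹^(n+1))^2 - (ν - ν⁻¹)^2
      = (ν^n - ν⁻¹^n) * (ν^(n+2) - ν⁻¹^(n+2)) := by
    have e1 : ν ^ (n+1) = ν ^ n * ν := pow_succ ν n
    have e2 : ν ^ (n+2) = ν ^ n * (ν * ν) := by rw [pow_add]; ring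
    have e3 : ν⁻¹ ^ (n+1) = ν⁻¹ ^ n * ν⁻¹ := pow_succ ν⁻¹ n
    have e4 : ν⁻¹ ^ (n+2) = ν⁻¹ ^ n * (ν⁻¹ * ν⁻¹) := by rw [pow_add]; ring
    rw [e1, e2, e3, e4]
    linear_combination (ν - ν⁻¹)^2 * hpown
  have key : qint ν (n+1) ^ 2 - 1 = qint ν n * qint ν (n+2) := by
    have hd2 : ((ν - ν⁻¹)^2) ≠ 0 := pow_ne_zero _ hdne
    unfold qint
    rw [div_pow, div_mul_div_comm, ← pow_two, ← hnum, sub_div, div_self hd2]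
  have keyR : (p+q)^2 - 1 = qint ν n * qint ν (n+2) := by rw [hsum]; exact key
  have keyC : ((p:ℂ)+q)^2 - 1 = (qint ν n : ℂ) * (qint ν (n+2) : ℂ) := by
    exact_mod_cast congrArg (Complex.ofReal) keyR
  set t : ℝ := Real.sqrt (qint ν n * qint ν (n + 2) / (p * q)) with htdef
  have ht2 : t ^ 2 = qint ν n * qint ν (n+2) / (p*q) := Real.sq_sqrt (by positivity)
  have hσ1 : σ * conj σ = 1 := by
    rw [Complex.mul_conj, Complex.normSq_eq_norm_sq, hσ]; norm_num
  have hτ1 : τ * conj τ = 1 := by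
    rw [Complex.mul_conj, Complex.normSq_eq_norm_sq, hτ]; norm_num
  have habsμ : ‖μ‖ = 1 := by
    have h := congrArg (‖·‖) hμ
    rw [norm_pow, hlam] at h
    nlinarith [norm_nonneg μ]
  have hμ1 : μ * conj μ = 1 := by
    rw [Complex.mul_conj, Complex.normSq_eq_norm_sq, habsμ]; norm_num
  have h1' : 1 + conj σ * p + conj τ * q = 0 := by
    have h := congrArg conj h1
    simp only [map_add, map_mul, map_one, map_zero, Complex.conj_ofReal] at h
    exact h
  have h2' : conj σ - conj τ = conj μ * t := by
    have h := congrArg conj h2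
    simp only [map_sub, map_mul, Complex.conj_ofReal] at h
    exact h
  have hμ2 : (conj μ)^2 = conj lam := by
    have h := congrArg conj hμ
    simp only [map_pow] at h
    exact h
  have hA : (σ + conj σ) * (p:ℂ) = (q:ℂ)^2 - 1 - (p:ℂ)^2 := by
    linear_combination (1 + σ * p) * h1' - (conj τ * q) * h1 - (p:ℂ)^2 * hσ1 + (q:ℂ)^2 * hτ1
  have hB : (τ + conj τ) * (q:ℂ) = (p:ℂ)^2 - 1 - (q:ℂ)^2 := by
    linear_combination (1 + τ * q) * h1' - (conj σ * p) * h1 - (q:ℂ)^2 * hτ1 + (p:ℂ)^2 * hσ1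
  have hX : (σ - τ + (conj σ - conj τ)) * ((p:ℂ) * q)
      = ((q:ℂ) - p) * ((qint ν n : ℂ) * (qint ν (n+2) : ℂ)) := by
    linear_combination (q:ℂ) * hA - (p:ℂ) * hB + ((q:ℂ) - p) * keyC
  have hY : (lam + conj lam + 2) * (t:ℂ)^2 = (σ - τ + (conj σ - conj τ))^2 := by
    linear_combination (-(t:ℂ)^2) * hμ - (t:ℂ)^2 * hμ2 - 2*(t:ℂ)^2*hμ1
      - (σ - τ + (conj σ - conj τ) + μ*t + conj μ * t) * (h2 + h2')
  have ht2C : (t:ℂ)^2 * ((p:ℂ)*q) = (qint ν n : ℂ) * (qint ν (n+2) : ℂ) := by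
    have h : t^2 * (p*q) = qint ν n * qint ν (n+2) := by
      rw [ht2]; field_simp
    exact_mod_cast congrArg (Complex.ofReal) h
  have hABne : (qint ν n : ℂ) * (qint ν (n+2) : ℂ) ≠ 0 := by
    have : (0:ℝ) < qint ν n * qint ν (n+2) := mul_pos ha hb
    exact_mod_cast ne_of_gt this
  have hZ : (lam + conj lam + 2) * ((p:ℂ) * q)
      = ((q:ℂ) - p)^2 * ((qint ν n : ℂ) * (qint ν (n+2) : ℂ)) := by
    apply mul_right_cancel₀ hABne
    linear_combination (-(lam + conj lam + 2)*((p:ℂ)*q)) * ht2C + ((p:ℂ)*q)^2 * hY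
      + ((σ - τ + (conj σ - conj τ)) * ((p:ℂ)*q) + ((q:ℂ)-p)*((qint ν n : ℂ) * (qint ν (n+2) : ℂ))) * hX
  have hlaminv : lam⁻¹ = conj lam := Complex.inv_eq_conj hlam
  rw [hlaminv]
  have hpC : (p:ℂ) ≠ 0 := by exact_mod_cast ne_of_gt hp
  have hqC : (q:ℂ) ≠ 0 := by exact_mod_cast ne_of_gt hq
  have hn0 : (qint ν n : ℂ) ≠ 0 := by exact_mod_cast ne_of_gt ha
  have hn2 : (qint ν (n+2) : ℂ) ≠ 0 := by exact_mod_cast ne_of_gt hb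
  push_cast
  field_simp
  linear_combination -hZ
end

section
/- Let ν > 1 be real, n ≥ 1, [k] = (ν^k − ν^{−k})/(ν − ν^{−1}). Suppose p ≥ q > 0 are real with p + q = [n+1], and r = p/q satisfies r + 1/r = (λ + λ⁻¹ + 2)/([n][n+2]) + 2 for some root of unity λ. Then p − q ≤ 1. -/
lemma qint_pos (ν : ℝ) (hν : 1 < ν) (k : ℕ) (hk : 1 ≤ k) : 0 < qint ν k := by
  have h0 : (0:ℝ) < ν := by linarith
  have hinv : ν⁻¹ < 1 := by
    rw [inv_lt_one_iff₀]; right; exact hν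
  have hinvpos : (0:ℝ) < ν⁻¹ := by positivity
  have h1 : ν⁻¹ ^ k < 1 := pow_lt_one₀ hinvpos.le hinv (by omega)
  have h2 : (1:ℝ) ≤ ν ^ k := one_le_pow₀ hν.le
  have h3 : ν⁻¹ < ν := lt_trans hinv hν
  exact div_pos (by linarith) (by linarith)

lemma qint_sq (ν : ℝ) (hν : 1 < ν) (n : ℕ) :
    qint ν (n + 1) ^ 2 - 1 = qint ν n * qint ν (n + 2) := by
  have h0 : ν ≠ 0 := by positivity
  have hinv : ν⁻¹ < ν := lt_trans (by rw [inv_lt_one_iff₀]; right; exact hν) hν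
  have hd : ν - ν⁻¹ ≠ 0 := by linarith
  have ha : ν ^ n ≠ 0 := pow_ne_zero _ h0
  unfold qint
  simp only [inv_pow, pow_succ]
  generalize hA : (ν:ℝ) ^ n = a at ha ⊢
  have hden : a ^ 2 * ν ^ 2 - a ^ 2 * ν ^ 4 * 2 + a ^ 2 * ν ^ 6 ≠ 0 := by
    have h2 : a ^ 2 * ν ^ 2 - a ^ 2 * ν ^ 4 * 2 + a ^ 2 * ν ^ 6 = a^2 * ν^2 * (ν^2-1)^2 := by
      ring
    rw [h2]
    have : ν ^ 2 - 1 ≠ 0 := by nlinarith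
    positivity
  field_simp
  have h' : (1 - ν ^ 2 * 2 + ν ^ 4 : ℝ) ≠ 0 := by
    have : (1 - ν ^ 2 * 2 + ν ^ 4 : ℝ) = (ν ^ 2 - 1) ^ 2 := by ring
    rw [this]; have : ν ^ 2 - 1 ≠ 0 := by nlinarith
    positivity
  linear_combination a ^ 2 * mul_inv_cancel₀ h'

theorem stmt_12 (ν : ℝ) (hν : 1 < ν) (n : ℕ) (hn : 1 ≤ n)
    (p q : ℝ) (hq : 0 < q) (hpq : q ≤ p) (hsum : p + q = qint ν (n + 1))
    (lam : ℂ) (m : ℕ) (hm : 0 < m) (hroot : lam ^ m = 1)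
    (h : ((p / q + q / p : ℝ) : ℂ) =
      (lam + lam⁻¹ + 2) / ((qint ν n * qint ν (n + 2) : ℝ) : ℂ) + 2) :
    p - q ≤ 1 := by
  -- |lam| = 1
  have habs : ‖lam‖ = 1 := by
    have h1 : ‖lam‖ ^ m = 1 := by
      rw [← norm_pow, hroot, norm_one]
    have h2 := (pow_eq_one_iff_cases).mp h1
    rcases h2 with h2 | h2 | h2
    · omega
    · exact h2
    · nlinarith [norm_nonneg lam]
  have hinv : lam⁻¹ = (starRingEnd ℂ) lam := Complex.inv_eq_conj habs
  have hre : lam + lam⁻¹ = ((2 * lam.re : ℝ) : ℂ) := by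
    rw [hinv, Complex.add_conj]
  set D : ℝ := qint ν n * qint ν (n + 2) with hDdef
  have hD : 0 < D := mul_pos (qint_pos ν hν n hn) (qint_pos ν hν (n+2) (by omega))
  -- turn h into a real equation
  have hE : p / q + q / p = (2 * lam.re + 2) / D + 2 := by
    have : ((p / q + q / p : ℝ) : ℂ) = (((2 * lam.re + 2) / D + 2 : ℝ) : ℂ) := by
      rw [h, hre]; push_cast; ring
    exact_mod_cast this
  have hRe : lam.re ≤ 1 := by
    have := Complex.abs_re_le_norm lam
    rw [habs] at this
    exact (abs_le.mp this).2
  have hid : (p + q) ^ 2 - 1 = D := by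
    rw [hsum]; exact qint_sq ν hν n
  have hp : 0 < p := lt_of_lt_of_le hq hpq
  have hEm : (p ^ 2 + q ^ 2) * D = ((2 * lam.re + 2) + 2 * D) * (p * q) := by
    field_simp at hE
    linarith [hE]
  -- (p-q)^2 * D ≤ 4 p q, D = (p+q)^2 - 1
  have hsq : (p - q) ^ 2 ≤ 1 := by
    nlinarith [mul_pos hp hq, sq_nonneg (p - q), sq_nonneg (p + q)]
  nlinarith [sq_nonneg (p - q - 1)]
end
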